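/- Let n ≥ 1, let α : ℝⁿ → ℝ^{n×n} be a smooth map with α(x) symmetric and invertible for every x, let Γ* : ℝⁿ → ℝ^{n×n×n} be smooth with the metricity property ∂α_{jk}/∂xⁱ = Σ_l (α_{lk}Γ*_{ij}^l + α_{jl}Γ*_{ik}^l) everywhere, and let β₁,…,βₙ : ℝⁿ → ℝ be smooth. Define the dual components β^l(x) := Σ_k (α(x)⁻¹)_{lk}·β_k(x). Let p ∈ ℝⁿ satisfy α(p) = identity matrix, β_k(p) = 0 for all k ≠ n, and β_n(p) ≠ 0. Then for every i ∈ {1,…,n}: ∂/∂xⁱ (Σ_{j,k} β^j·β^k·α_{jk})(p) = −2·β_n(p)²·(Γ*_{in}^n(p) − (1/β_n(p))·∂β_n/∂xⁱ(p)). -/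

import Mathlib

open Finset

private lemma det_contDiff {n : ℕ} {A : (Fin n → ℝ) → Matrix (Fin n) (Fin n) ℝ}
    (hA : ∀ j k, ContDiff ℝ (⊤ : ℕ∞) fun x => A x j k) :
    ContDiff ℝ (⊤ : ℕ∞) fun x => (A x).det := by
  have h : (fun x => (A x).det) =
      fun x => ∑ σ : Equiv.Perm (Fin n), ((Equiv.Perm.sign σ : ℤ) : ℝ) * ∏ i, A x (σ i) i := by
    funext x
    rw [Matrix.det_apply]
    congr 1; funext σ
    simp [Units.smul_def, zsmul_eq_mul]
  rw [h]
  exact ContDiff.sum fun σ _ => contDiff_const.mul (contDiff_prod fun i _ => hA (σ i) i)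

private lemma inv_entry_contDiff {n : ℕ} {A : (Fin n → ℝ) → Matrix (Fin n) (Fin n) ℝ}
    (hA : ∀ j k, ContDiff ℝ (⊤ : ℕ∞) fun x => A x j k) (hU : ∀ x, IsUnit (A x).det) (j l : Fin n) :
    ContDiff ℝ (⊤ : ℕ∞) fun x => (A x)⁻¹ j l := by
  have hadj : ContDiff ℝ (⊤ : ℕ∞) fun x => (A x).adjugate j l := by
    have h : (fun x => (A x).adjugate j l) =
        fun x => ((A x).updateRow l (Pi.single j 1)).det := by
      funext x; rw [Matrix.adjugate_apply]
    rw [h]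
    apply det_contDiff
    intro a b
    rcases eq_or_ne a l with rfl | h
    · simpa [Matrix.updateRow_apply] using contDiff_const
    · simpa [Matrix.updateRow_apply, h] using hA a b
  have hdet := det_contDiff hA
  have h : (fun x => (A x)⁻¹ j l) = fun x => ((A x).det)⁻¹ * (A x).adjugate j l := by
    funext x
    rw [Matrix.inv_def]
    simp [Ring.inverse_eq_inv']
  rw [h]
  exact (hdet.inv fun x => (hU x).ne_zero).mul hadj

/-- in adapted coordinates at `p` (orthonormal for `α` at `p`, with
`β_k(p) = 0` for `k ≠ n` and `β_n(p) ≠ 0`), the derivative of the `α`-norm-square of the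
dual vector field `β♯`, with components `β^l = Σ_k (α⁻¹)_{lk} β_k`, satisfies
`∂/∂xⁱ (Σ_{j,k} β^j β^k α_{jk})(p)
  = −2·β_n(p)²·(Γ*_{in}^n(p) − (1/β_n(p))·∂β_n/∂xⁱ(p))`. -/
theorem dual_norm_square_derivative (n : ℕ) (hn : 1 ≤ n)
    (α : (Fin n → ℝ) → Matrix (Fin n) (Fin n) ℝ)
    (hαsmooth : ∀ j k : Fin n, ContDiff ℝ (⊤ : ℕ∞) fun x => α x j k)
    (hαsymm : ∀ x, (α x).IsSymm)
    (hαinv : ∀ x, IsUnit (α x).det)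
    (Γs : (Fin n → ℝ) → Fin n → Fin n → Fin n → ℝ)
    (hΓsmooth : ∀ i j k : Fin n, ContDiff ℝ (⊤ : ℕ∞) fun x => Γs x i j k)
    (hmet : ∀ (x : Fin n → ℝ) (i j k : Fin n),
      fderiv ℝ (fun x' => α x' j k) x (Pi.single i 1) =
        ∑ l : Fin n, (α x l k * Γs x i j l + α x j l * Γs x i k l))
    (β : Fin n → (Fin n → ℝ) → ℝ)
    (hβsmooth : ∀ j : Fin n, ContDiff ℝ (⊤ : ℕ∞) (β j))
    (p : Fin n → ℝ)
    (hαp : α p = 1)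
    (hβ0 : ∀ k : Fin n, k ≠ ⟨n - 1, by omega⟩ → β k p = 0)
    (hβn : β ⟨n - 1, by omega⟩ p ≠ 0) :
    ∀ i : Fin n,
      fderiv ℝ
          (fun x => ∑ j : Fin n, ∑ k : Fin n,
            (∑ l : Fin n, (α x)⁻¹ j l * β l x) * (∑ l : Fin n, (α x)⁻¹ k l * β l x) *
              α x j k)
          p (Pi.single i 1) =
        -2 * (β ⟨n - 1, by omega⟩ p) ^ 2 *
          (Γs p i ⟨n - 1, by omega⟩ ⟨n - 1, by omega⟩ -
            (1 / β ⟨n - 1, by omega⟩ p) *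
              fderiv ℝ (β ⟨n - 1, by omega⟩) p (Pi.single i 1)) := by
  intro i
  obtain ⟨m, hmdef⟩ : ∃ m : Fin n, m = ⟨n - 1, by omega⟩ := ⟨_, rfl⟩
  rw [← hmdef] at hβ0 hβn ⊢
  set v : Fin n → ℝ := Pi.single i 1 with hv
  have dα : ∀ j k : Fin n, DifferentiableAt ℝ (fun x => α x j k) p :=
    fun j k => ((hαsmooth j k).differentiable (by simp)) p
  have dβ : ∀ j : Fin n, DifferentiableAt ℝ (β j) p :=
    fun j => ((hβsmooth j).differentiable (by simp)) p
  have dInv : ∀ j l : Fin n, DifferentiableAt ℝ (fun x => (α x)⁻¹ j l) p :=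
    fun j l => ((inv_entry_contDiff hαsmooth hαinv j l).differentiable (by simp)) p
  set B : Fin n → (Fin n → ℝ) → ℝ := fun k x => ∑ l, (α x)⁻¹ k l * β l x with hB
  have dB : ∀ k, DifferentiableAt ℝ (B k) p := fun k =>
    DifferentiableAt.fun_sum fun l _ => (dInv k l).mul (dβ l)
  have hαpinv : (α p)⁻¹ = 1 := by rw [hαp, inv_one]
  have hBp : ∀ k, B k p = β k p := by
    intro k
    simp [hB, hαpinv, Matrix.one_apply, ite_mul]
  have hBp0 : ∀ k, k ≠ m → B k p = 0 := fun k hk => by rw [hBp k]; exact hβ0 k hk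
  have Dmul : ∀ (f g : (Fin n → ℝ) → ℝ), DifferentiableAt ℝ f p → DifferentiableAt ℝ g p →
      fderiv ℝ (fun x => f x * g x) p v = f p * fderiv ℝ g p v + g p * fderiv ℝ f p v := by
    intro f g hf hg
    rw [fderiv_fun_mul hf hg]
    simp [smul_eq_mul]
  have Dsum : ∀ (f : Fin n → (Fin n → ℝ) → ℝ), (∀ j, DifferentiableAt ℝ (f j) p) →
      fderiv ℝ (fun x => ∑ j, f j x) p v = ∑ j, fderiv ℝ (f j) p v := by
    intro f hf
    rw [fderiv_fun_sum fun j _ => hf j]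
    simp
  have hC : ∀ (j : Fin n) (x : Fin n → ℝ), ∑ k, α x j k * B k x = β j x := by
    intro j x
    have h1 : α x * (α x)⁻¹ = 1 := Matrix.mul_nonsing_inv _ (hαinv x)
    calc ∑ k, α x j k * B k x
        = ∑ l, (∑ k, α x j k * (α x)⁻¹ k l) * β l x := by
          simp only [hB, Finset.mul_sum]
          rw [Finset.sum_comm]
          simp [Finset.sum_mul, mul_assoc]
      _ = ∑ l, (1 : Matrix (Fin n) (Fin n) ℝ) j l * β l x := by
          simp only [← Matrix.mul_apply, h1]
      _ = β j x := by simp [Matrix.one_apply, ite_mul]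
  have hD : ∀ j : Fin n,
      fderiv ℝ (B j) p v = fderiv ℝ (β j) p v - β m p * fderiv ℝ (fun x => α x j m) p v := by
    intro j
    have heq : (fun x => ∑ k, α x j k * B k x) = β j := funext fun x => hC j x
    have h2 : fderiv ℝ (fun x => ∑ k, α x j k * B k x) p v = fderiv ℝ (β j) p v := by rw [heq]
    rw [Dsum _ (fun k => (dα j k).fun_mul (dB k))] at h2
    have h3 : ∀ k : Fin n, fderiv ℝ (fun x => α x j k * B k x) p v
        = α p j k * fderiv ℝ (B k) p v + B k p * fderiv ℝ (fun x => α x j k) p v :=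
      fun k => Dmul _ _ (dα j k) (dB k)
    rw [Finset.sum_congr rfl (fun k _ => h3 k)] at h2
    rw [Finset.sum_add_distrib] at h2
    have h4 : ∑ k, α p j k * fderiv ℝ (B k) p v = fderiv ℝ (B j) p v := by
      rw [hαp]
      simp [Matrix.one_apply, ite_mul]
    have h5 : ∑ k, B k p * fderiv ℝ (fun x => α x j k) p v
        = β m p * fderiv ℝ (fun x => α x j m) p v := by
      rw [Finset.sum_eq_single m]
      · rw [hBp]
      · intro k _ hk; rw [hBp0 k hk, zero_mul]
      · simp
    rw [h4, h5] at h2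
    linarith [h2]
  have hαmm : fderiv ℝ (fun x => α x m m) p v = 2 * Γs p i m m := by
    rw [hv, hmet p i m m, hαp]
    rw [Finset.sum_add_distrib]
    simp [Matrix.one_apply, ite_mul]
    ring
  have hgoal : (fun x => ∑ j : Fin n, ∑ k : Fin n,
      (∑ l : Fin n, (α x)⁻¹ j l * β l x) * (∑ l : Fin n, (α x)⁻¹ k l * β l x) * α x j k)
      = fun x => ∑ j : Fin n, ∑ k : Fin n, B j x * B k x * α x j k := rfl
  rw [hgoal]
  have dBB : ∀ j k : Fin n, DifferentiableAt ℝ (fun x => B j x * B k x * α x j k) p :=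
    fun j k => ((dB j).mul (dB k)).mul (dα j k)
  rw [Dsum _ (fun j => DifferentiableAt.fun_sum fun k _ => dBB j k)]
  have h5 : ∀ j : Fin n, fderiv ℝ (fun x => ∑ k, B j x * B k x * α x j k) p v
      = ∑ k, fderiv ℝ (fun x => B j x * B k x * α x j k) p v :=
    fun j => Dsum _ (fun k => dBB j k)
  rw [Finset.sum_congr rfl fun j _ => h5 j]
  have h6 : ∀ j k : Fin n, fderiv ℝ (fun x => B j x * B k x * α x j k) p v
      = B j p * B k p * fderiv ℝ (fun x => α x j k) p v
        + α p j k * (B j p * fderiv ℝ (B k) p v + B k p * fderiv ℝ (B j) p v) := by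
    intro j k
    rw [Dmul _ _ ((dB j).fun_mul (dB k)) (dα j k), Dmul _ _ (dB j) (dB k)]
  rw [Finset.sum_congr rfl fun j _ => Finset.sum_congr rfl fun k _ => h6 j k]
  have houter : ∑ j : Fin n, ∑ k : Fin n,
      (B j p * B k p * fderiv ℝ (fun x => α x j k) p v
        + α p j k * (B j p * fderiv ℝ (B k) p v + B k p * fderiv ℝ (B j) p v))
      = B m p * B m p * fderiv ℝ (fun x => α x m m) p v
        + α p m m * (B m p * fderiv ℝ (B m) p v + B m p * fderiv ℝ (B m) p v) := by
    rw [Finset.sum_eq_single m]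
    · rw [Finset.sum_eq_single m]
      · intro k _ hk
        rw [hBp0 k hk, hαp]
        simp [Matrix.one_apply, (Ne.symm hk : m ≠ k)]
      · simp
    · intro j _ hj
      rw [Finset.sum_eq_single j]
      · rw [hBp0 j hj, hαp]
        simp [Matrix.one_apply]
      · intro k _ hk
        rw [hBp0 j hj, hαp]
        simp [Matrix.one_apply, (Ne.symm hk : j ≠ k)]
      · simp
    · simp
  rw [houter, hBp m, hD m, hαmm, hαp]
  simp only [Matrix.one_apply_eq]
  field_simp
  ring
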